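/- Under Assumption 1, let H := log(ν/(LZ))/log(1 − β) and let C > 0. Let ρ, η ∈ [ρ_l, ρ_u] with ρ ≤ η, suppose D(ρ) > 1, and suppose η − ρ ≤ (β/(LZ))·((D(ρ) − 1)/(D(ρ)^H − 1))·D(ρ)^{−1}·C, where D(ρ)^H denotes the real power. Then for every natural number M with M ≤ H, the new costs satisfy |Σ_{j=1}^{M} ‖g^j(z₀, ρ)‖ − Σ_{j=1}^{M} ‖g^j(z₀, η)‖| ≤ C. -/

import Mathlib

/-!
Co-coercivity of the gradient of a convex `L`-smooth function (Baillon–Haddad) makes the gradient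
step `x ↦ x - ρ ∇f(x)` Lipschitz with constant `D = Lρ - 1` once `Lρ ≥ 2`. Hence the errors
`e_j = ‖g^j(z₀, ρ) - g^j(z₀, η)‖` obey `e_{j+1} ≤ D e_j + (η - ρ) L ‖z₀‖ (1 - β)^j`, the last term
bounding the perturbation `(η - ρ) ∇f` along the `η`-trajectory, which contracts by `1 - β`.
Solving the recursion gives `β e_j ≤ (η - ρ) L Z D^j`; summing this geometric series up to
`M ≤ H` and inserting the bound on `η - ρ` gives `∑ e_j ≤ C`, and `∑ e_j` dominates the
difference of the costs.
-/

/-- `gdIter f' ρ j z` is the `j`-fold iterate `g^j(z, ρ)` of the one-step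
gradient-descent map `g(z, ρ) = z - ρ • f' z`. -/
noncomputable def gdIter {E : Type*} [NormedAddCommGroup E] [Module ℝ E]
    (f' : E → E) (ρ : ℝ) : ℕ → E → E
  | 0, z => z
  | n + 1, z => gdIter f' ρ n z - ρ • f' (gdIter f' ρ n z)

open Set RealInnerProductSpace

section ConvexSmooth

variable {E : Type*} [NormedAddCommGroup E] [InnerProductSpace ℝ E] [CompleteSpace E]
  {f : E → ℝ} {f' : E → E} {L : ℝ}

theorem HasGradientAt.hasDerivAt_comp_add_smul {g x v : E} {t : ℝ}
    (hf : HasGradientAt f g (x + t • v)) :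
    HasDerivAt (fun s : ℝ => f (x + s • v)) ⟪g, v⟫ t := by
  have hline : HasDerivAt (fun s : ℝ => x + s • v) v t := by
    simpa using ((hasDerivAt_id t).smul_const v).const_add x
  simpa [Function.comp_def] using
    (hasGradientAt_iff_hasFDerivAt.mp hf).comp_hasDerivAt t hline

theorem ConvexOn.add_inner_le_of_hasGradientAt {g x : E} (hconv : ConvexOn ℝ univ f)
    (hf : HasGradientAt f g x) (y : E) : f x + ⟪g, y - x⟫ ≤ f y := by
  have hline : ConvexOn ℝ univ (fun s : ℝ => f (x + s • (y - x))) := by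
    have hcomp : (fun s : ℝ => f (x + s • (y - x))) = f ∘ AffineMap.lineMap x y := by
      funext s
      simp [AffineMap.lineMap_apply_module', add_comm]
    simpa [hcomp] using hconv.comp_affineMap (AffineMap.lineMap x y)
  have hderiv := HasGradientAt.hasDerivAt_comp_add_smul (v := y - x) (t := 0)
    (by simpa using hf)
  have hslope := hline.le_slope_of_hasDerivAt (mem_univ 0) (mem_univ 1) one_pos hderiv
  simp [slope_def_field] at hslope
  linarith

theorem le_add_inner_add_of_lipschitz_gradient (hdiff : ∀ x, HasGradientAt f (f' x) x)
    (hlip : ∀ x y, ‖f' x - f' y‖ ≤ L * ‖x - y‖) (x y : E) :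
    f y ≤ f x + ⟪f' x, y - x⟫ + L / 2 * ‖y - x‖ ^ 2 := by
  set v := y - x
  set φ : ℝ → ℝ := fun t => f (x + t • v) - t * ⟪f' x, v⟫ - L / 2 * t ^ 2 * ‖v‖ ^ 2
  have hφ : ∀ t, HasDerivAt φ (⟪f' (x + t • v) - f' x, v⟫ - L * t * ‖v‖ ^ 2) t := by
    intro t
    have h := (((hdiff (x + t • v)).hasDerivAt_comp_add_smul.sub
      ((hasDerivAt_id t).mul_const ⟪f' x, v⟫)).sub
      (((hasDerivAt_pow 2 t).const_mul (L / 2)).mul_const (‖v‖ ^ 2)))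
    refine h.congr_deriv ?_
    rw [inner_sub_left]
    ring
  have hanti : AntitoneOn φ (Icc 0 1) := by
    refine antitoneOn_of_hasDerivWithinAt_nonpos (convex_Icc 0 1)
      (fun t _ => (hφ t).continuousAt.continuousWithinAt)
      (fun t _ => (hφ t).hasDerivWithinAt) fun t ht => ?_
    rw [interior_Icc] at ht
    have hnorm : ‖(x + t • v) - x‖ = t * ‖v‖ := by
      simp [norm_smul, abs_of_pos ht.1]
    have := (real_inner_le_norm (f' (x + t • v) - f' x) v).trans
      (mul_le_mul_of_nonneg_right (hlip _ _) (norm_nonneg v))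
    rw [hnorm] at this
    linarith
  have h01 := hanti (left_mem_Icc.mpr zero_le_one) (right_mem_Icc.mpr zero_le_one) zero_le_one
  simp [φ, v] at h01
  linarith

theorem add_inner_add_sq_le_of_convexOn_of_lipschitz_gradient (hL : 0 < L)
    (hconv : ConvexOn ℝ univ f) (hdiff : ∀ x, HasGradientAt f (f' x) x)
    (hlip : ∀ x y, ‖f' x - f' y‖ ≤ L * ‖x - y‖) (x y : E) :
    f x + ⟪f' x, y - x⟫ + 1 / (2 * L) * ‖f' y - f' x‖ ^ 2 ≤ f y := by
  -- compare `f` at the point `w` reached by a gradient step of length `1/L` from `y`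
  set d := f' y - f' x
  set w := y - L⁻¹ • d
  have hlower := hconv.add_inner_le_of_hasGradientAt (hdiff x) w
  have hupper := le_add_inner_add_of_lipschitz_gradient hdiff hlip y w
  have hwx : w - x = (y - x) - L⁻¹ • d := by simp only [w]; abel
  have hwy : w - y = -(L⁻¹ • d) := by simp only [w]; abel
  rw [hwx, inner_sub_right, real_inner_smul_right] at hlower
  rw [hwy, inner_neg_right, real_inner_smul_right, norm_neg, norm_smul, Real.norm_eq_abs,
    abs_inv, abs_of_pos hL] at hupper
  have hd : L⁻¹ * ⟪f' y, d⟫ - L⁻¹ * ⟪f' x, d⟫ = L⁻¹ * ‖d‖ ^ 2 := by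
    rw [← mul_sub, ← inner_sub_left, real_inner_self_eq_norm_sq]
  have hcoef : L / 2 * (L⁻¹ * ‖d‖) ^ 2 = L⁻¹ * ‖d‖ ^ 2 - 1 / (2 * L) * ‖d‖ ^ 2 := by
    field_simp
    ring
  rw [hcoef] at hupper
  linarith

theorem inv_mul_norm_sq_le_inner_of_convexOn_of_lipschitz_gradient (hL : 0 < L)
    (hconv : ConvexOn ℝ univ f) (hdiff : ∀ x, HasGradientAt f (f' x) x)
    (hlip : ∀ x y, ‖f' x - f' y‖ ≤ L * ‖x - y‖) (x y : E) :
    L⁻¹ * ‖f' x - f' y‖ ^ 2 ≤ ⟪f' x - f' y, x - y⟫ := by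
  have hxy := add_inner_add_sq_le_of_convexOn_of_lipschitz_gradient hL hconv hdiff hlip x y
  have hyx := add_inner_add_sq_le_of_convexOn_of_lipschitz_gradient hL hconv hdiff hlip y x
  have hinner : ⟪f' x, y - x⟫ + ⟪f' y, x - y⟫ = -⟪f' x - f' y, x - y⟫ := by
    rw [← neg_sub x y, inner_neg_right, inner_sub_left]
    ring
  rw [norm_sub_rev] at hxy
  have hinv : L⁻¹ = 1 / (2 * L) + 1 / (2 * L) := by
    field_simp
    ring
  rw [hinv]
  linarith

theorem norm_sub_smul_sub_sub_smul_le_of_convexOn (hL : 0 < L)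
    (hconv : ConvexOn ℝ univ f) (hdiff : ∀ x, HasGradientAt f (f' x) x)
    (hlip : ∀ x y, ‖f' x - f' y‖ ≤ L * ‖x - y‖) {ρ : ℝ} (hρ : 2 ≤ L * ρ) (x y : E) :
    ‖(x - ρ • f' x) - (y - ρ • f' y)‖ ≤ (L * ρ - 1) * ‖x - y‖ := by
  have hρ0 : 0 ≤ ρ := by nlinarith
  set u := x - y
  set w := f' x - f' y
  have hsplit : (x - ρ • f' x) - (y - ρ • f' y) = u - ρ • w := by
    simp only [u, w, smul_sub]; abel
  have hcoco : ‖w‖ ^ 2 ≤ L * ⟪w, u⟫ := by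
    have := mul_le_mul_of_nonneg_left
      (inv_mul_norm_sq_le_inner_of_convexOn_of_lipschitz_gradient hL hconv hdiff hlip x y) hL.le
    rwa [← mul_assoc, mul_inv_cancel₀ hL.ne', one_mul] at this
  have hw : ‖w‖ ^ 2 ≤ (L * ‖u‖) ^ 2 := pow_le_pow_left₀ (norm_nonneg w) (hlip x y) 2
  have hexpand : ‖u - ρ • w‖ ^ 2 = ‖u‖ ^ 2 - 2 * ρ * ⟪w, u⟫ + ρ ^ 2 * ‖w‖ ^ 2 := by
    rw [norm_sub_sq_real, real_inner_smul_right, norm_smul, Real.norm_eq_abs, abs_of_nonneg hρ0,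
      real_inner_comm]
    ring
  -- split `L ρ² ‖w‖² = ρ (Lρ - 2) ‖w‖² + 2ρ ‖w‖²`; bound the first part by Lipschitz
  -- continuity and the second by co-coercivity
  have hsq : ‖u - ρ • w‖ ^ 2 ≤ ((L * ρ - 1) * ‖u‖) ^ 2 := by
    rw [hexpand]
    nlinarith [mul_nonneg hρ0 (sub_nonneg.mpr hcoco),
      mul_nonneg (mul_nonneg hρ0 (sub_nonneg.mpr hρ)) (sub_nonneg.mpr hw)]
  rw [hsplit]
  exact le_of_pow_le_pow_left₀ two_ne_zero (by nlinarith [norm_nonneg u]) hsq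

end ConvexSmooth

theorem mul_sub_le_mul_pow_sub_pow {e : ℕ → ℝ} {D q K : ℝ} (hD : 0 ≤ D) (hqD : q ≤ D)
    (h0 : e 0 ≤ 0) (hrec : ∀ n, e (n + 1) ≤ D * e n + K * q ^ n) (n : ℕ) :
    e n * (D - q) ≤ K * (D ^ n - q ^ n) := by
  induction n with
  | zero => simpa using mul_nonpos_of_nonpos_of_nonneg h0 (sub_nonneg.mpr hqD)
  | succ n ih =>
    calc e (n + 1) * (D - q) ≤ (D * e n + K * q ^ n) * (D - q) :=
          mul_le_mul_of_nonneg_right (hrec n) (sub_nonneg.mpr hqD)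
      _ = D * (e n * (D - q)) + K * q ^ n * (D - q) := by ring
      _ ≤ D * (K * (D ^ n - q ^ n)) + K * q ^ n * (D - q) := by gcongr
      _ = K * (D ^ (n + 1) - q ^ (n + 1)) := by ring

theorem sum_Icc_pow_mul_sub_one_le_rpow {D H : ℝ} (hD : 1 ≤ D) {M : ℕ} (hM : (M : ℝ) ≤ H) :
    (∑ j ∈ Finset.Icc 1 M, D ^ j) * (D - 1) ≤ D * (D ^ H - 1) := by
  rw [← Finset.Ico_add_one_right_eq_Icc, geom_sum_Ico_mul D (by omega), pow_succ', pow_one,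
    ← mul_sub_one]
  have hpow : D ^ M ≤ D ^ H := by
    rw [← Real.rpow_natCast]
    exact Real.rpow_le_rpow_of_exponent_le hD hM
  gcongr

theorem abs_sum_norm_sub_sum_norm_le {ι E : Type*} [SeminormedAddCommGroup E] (s : Finset ι)
    (a b : ι → E) :
    |∑ i ∈ s, ‖a i‖ - ∑ i ∈ s, ‖b i‖| ≤ ∑ i ∈ s, ‖a i - b i‖ := by
  rw [← Finset.sum_sub_distrib]
  exact (Finset.abs_sum_le_sum_abs _ _).trans
    (Finset.sum_le_sum fun i _ => abs_norm_sub_norm_le (a i) (b i))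

section GradientDescent

variable {E : Type*} [NormedAddCommGroup E] [NormedSpace ℝ E] {f' : E → E}

theorem gdIter_succ (ρ : ℝ) (n : ℕ) (z : E) :
    gdIter f' ρ (n + 1) z = gdIter f' ρ n z - ρ • f' (gdIter f' ρ n z) := rfl

theorem norm_gdIter_le {ρ c : ℝ} (hc : 0 ≤ c) (hcontract : ∀ z, ‖z - ρ • f' z‖ ≤ c * ‖z‖)
    (j : ℕ) (z : E) : ‖gdIter f' ρ j z‖ ≤ c ^ j * ‖z‖ := by
  induction j with
  | zero => simp [gdIter]
  | succ n ih =>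
    calc ‖gdIter f' ρ (n + 1) z‖ ≤ c * ‖gdIter f' ρ n z‖ := hcontract _
      _ ≤ c * (c ^ n * ‖z‖) := by gcongr
      _ = c ^ (n + 1) * ‖z‖ := by ring

theorem norm_gdIter_succ_sub_gdIter_succ_le {ρ η D : ℝ}
    (hstep : ∀ x y : E, ‖(x - ρ • f' x) - (y - ρ • f' y)‖ ≤ D * ‖x - y‖) (n : ℕ) (z : E) :
    ‖gdIter f' ρ (n + 1) z - gdIter f' η (n + 1) z‖ ≤
      D * ‖gdIter f' ρ n z - gdIter f' η n z‖ + |η - ρ| * ‖f' (gdIter f' η n z)‖ := by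
  set x := gdIter f' ρ n z
  set y := gdIter f' η n z
  have hsplit : gdIter f' ρ (n + 1) z - gdIter f' η (n + 1) z =
      ((x - ρ • f' x) - (y - ρ • f' y)) + (η - ρ) • f' y := by
    rw [gdIter_succ, gdIter_succ, sub_smul]
    abel
  rw [hsplit, ← Real.norm_eq_abs, ← norm_smul]
  exact (norm_add_le _ _).trans (add_le_add_left (hstep x y) _)

end GradientDescent

section ConvexGradientDescent

variable {E : Type*} [NormedAddCommGroup E] [InnerProductSpace ℝ E] [CompleteSpace E]
  {f : E → ℝ} {f' : E → E} {L ρ η c : ℝ}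

theorem norm_gdIter_sub_gdIter_mul_le (hL : 0 < L) (hconv : ConvexOn ℝ univ f)
    (hdiff : ∀ x, HasGradientAt f (f' x) x) (hlip : ∀ x y, ‖f' x - f' y‖ ≤ L * ‖x - y‖)
    (hgrad0 : f' 0 = 0) (hρ : 2 ≤ L * ρ) (hρη : ρ ≤ η) (hc0 : 0 ≤ c) (hc1 : c ≤ 1)
    (hcontract : ∀ z, ‖z - η • f' z‖ ≤ c * ‖z‖) (j : ℕ) (z : E) :
    ‖gdIter f' ρ j z - gdIter f' η j z‖ * (1 - c) ≤ (η - ρ) * (L * ‖z‖) * (L * ρ - 1) ^ j := by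
  have hgrad : ∀ n, |η - ρ| * ‖f' (gdIter f' η n z)‖ ≤ (η - ρ) * (L * ‖z‖) * c ^ n := by
    intro n
    have hf' : ‖f' (gdIter f' η n z)‖ ≤ L * (c ^ n * ‖z‖) := by
      have := hlip (gdIter f' η n z) 0
      rw [hgrad0, sub_zero, sub_zero] at this
      exact this.trans (mul_le_mul_of_nonneg_left (norm_gdIter_le hc0 hcontract n z) hL.le)
    rw [abs_of_nonneg (sub_nonneg.mpr hρη)]
    exact (mul_le_mul_of_nonneg_left hf' (sub_nonneg.mpr hρη)).trans_eq (by ring)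
  have hrec := mul_sub_le_mul_pow_sub_pow (e := fun n => ‖gdIter f' ρ n z - gdIter f' η n z‖)
    (D := L * ρ - 1) (q := c) (K := (η - ρ) * (L * ‖z‖))
    (by linarith) (by linarith) (by simp [gdIter])
    (fun n => (norm_gdIter_succ_sub_gdIter_succ_le
      (norm_sub_smul_sub_sub_smul_le_of_convexOn hL hconv hdiff hlip hρ) n z).trans
        (add_le_add_right (hgrad n) _)) j
  have hK : 0 ≤ (η - ρ) * (L * ‖z‖) := by
    have := sub_nonneg.mpr hρη
    positivity
  calc ‖gdIter f' ρ j z - gdIter f' η j z‖ * (1 - c)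
      ≤ ‖gdIter f' ρ j z - gdIter f' η j z‖ * (L * ρ - 1 - c) := by gcongr; linarith
    _ ≤ (η - ρ) * (L * ‖z‖) * ((L * ρ - 1) ^ j - c ^ j) := hrec
    _ ≤ (η - ρ) * (L * ‖z‖) * (L * ρ - 1) ^ j := by
      gcongr
      exact sub_le_self _ (pow_nonneg hc0 j)

theorem sum_norm_gdIter_sub_gdIter_mul_le (hL : 0 < L) (hconv : ConvexOn ℝ univ f)
    (hdiff : ∀ x, HasGradientAt f (f' x) x) (hlip : ∀ x y, ‖f' x - f' y‖ ≤ L * ‖x - y‖)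
    (hgrad0 : f' 0 = 0) (hρ : 2 ≤ L * ρ) (hρη : ρ ≤ η) (hc0 : 0 ≤ c) (hc1 : c ≤ 1)
    (hcontract : ∀ z, ‖z - η • f' z‖ ≤ c * ‖z‖) {M : ℕ} {H : ℝ} (hM : (M : ℝ) ≤ H) (z : E) :
    (∑ j ∈ Finset.Icc 1 M, ‖gdIter f' ρ j z - gdIter f' η j z‖) * ((1 - c) * (L * ρ - 1 - 1)) ≤
      (η - ρ) * (L * ‖z‖) * ((L * ρ - 1) * ((L * ρ - 1) ^ H - 1)) := by
  have hK : 0 ≤ (η - ρ) * (L * ‖z‖) := by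
    have := sub_nonneg.mpr hρη
    positivity
  calc (∑ j ∈ Finset.Icc 1 M, ‖gdIter f' ρ j z - gdIter f' η j z‖) * ((1 - c) * (L * ρ - 1 - 1))
      = (∑ j ∈ Finset.Icc 1 M, ‖gdIter f' ρ j z - gdIter f' η j z‖ * (1 - c)) *
          (L * ρ - 1 - 1) := by
        rw [← mul_assoc, Finset.sum_mul]
    _ ≤ (∑ j ∈ Finset.Icc 1 M, (η - ρ) * (L * ‖z‖) * (L * ρ - 1) ^ j) * (L * ρ - 1 - 1) := by
        refine mul_le_mul_of_nonneg_right (Finset.sum_le_sum fun j _ => ?_) (by linarith)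
        exact norm_gdIter_sub_gdIter_mul_le hL hconv hdiff hlip hgrad0 hρ hρη hc0 hc1 hcontract j z
    _ ≤ (η - ρ) * (L * ‖z‖) * ((L * ρ - 1) * ((L * ρ - 1) ^ H - 1)) := by
        rw [← Finset.mul_sum, mul_assoc]
        exact mul_le_mul_of_nonneg_left (sum_Icc_pow_mul_sub_one_le_rpow (by linarith) hM) hK

end ConvexGradientDescent

theorem gd_new_cost_error_estimation_general
    {E : Type*} [NormedAddCommGroup E] [InnerProductSpace ℝ E] [CompleteSpace E]
    (f : E → ℝ) (f' : E → E) (L : ℝ) (hL : 0 < L)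
    (hconv : ConvexOn ℝ Set.univ f)
    (hdiff : ∀ x : E, HasGradientAt f (f' x) x)
    (hlip : ∀ z₁ z₂ : E, ‖f' z₁ - f' z₂‖ ≤ L * ‖z₁ - z₂‖)
    (ρl ρu : ℝ)
    (β : ℝ) (hβ : β ∈ Set.Ioo (0 : ℝ) 1)
    (hcontract : ∀ z : E, ∀ ρ' ∈ Set.Icc ρl ρu, ‖z - ρ' • f' z‖ ≤ (1 - β) * ‖z‖)
    (hgrad0 : f' 0 = 0)
    (ν Z : ℝ) (hν : 0 < ν) (hνLZ : ν < L * Z)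
    (z₀ : E) (hz₀Z : ‖z₀‖ ≤ Z)
    (H : ℝ) (hH : H = Real.log (ν / (L * Z)) / Real.log (1 - β))
    (C : ℝ)
    (ρ η : ℝ) (hη : η ∈ Set.Icc ρl ρu) (hρη : ρ ≤ η)
    (hD : 1 < max 1 (L * ρ - 1))
    (hgap : η - ρ ≤ β / (L * Z) *
      ((max 1 (L * ρ - 1) - 1) / ((max 1 (L * ρ - 1)) ^ H - 1)) *
      (max 1 (L * ρ - 1))⁻¹ * C) :
    ∀ M : ℕ, (M : ℝ) ≤ H →
      |(∑ j ∈ Finset.Icc 1 M, ‖gdIter f' ρ j z₀‖) -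
        ∑ j ∈ Finset.Icc 1 M, ‖gdIter f' η j z₀‖| ≤ C := by
  intro M hM
  obtain ⟨hβ0, hβ1⟩ := hβ
  have hD1 : 1 < L * ρ - 1 := (lt_max_iff.mp hD).resolve_left (lt_irrefl 1)
  have hsum := sum_norm_gdIter_sub_gdIter_mul_le hL hconv hdiff hlip hgrad0 (by linarith) hρη
    (by linarith) (by linarith) (fun z => hcontract z η hη) hM z₀
  rw [sub_sub_cancel] at hsum
  rw [max_eq_right hD1.le] at hgap
  set D := L * ρ - 1
  have hLZ : 0 < L * Z := hν.trans hνLZ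
  have hH0 : 0 < H := hH ▸ div_pos_of_neg_of_neg
    (Real.log_neg (by positivity) ((div_lt_one hLZ).mpr hνLZ))
    (Real.log_neg (by linarith) (by linarith))
  have hDH : 0 < D ^ H - 1 := sub_pos.mpr (Real.one_lt_rpow hD1 hH0)
  have hgap' : (η - ρ) * (L * Z) * (D * (D ^ H - 1)) ≤ C * (β * (D - 1)) := by
    calc (η - ρ) * (L * Z) * (D * (D ^ H - 1))
        ≤ β / (L * Z) * ((D - 1) / (D ^ H - 1)) * D⁻¹ * C * (L * Z * (D * (D ^ H - 1))) := by
          rw [mul_assoc]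
          exact mul_le_mul_of_nonneg_right hgap (by positivity)
      _ = C * (β * (D - 1)) := by
          field_simp [right_ne_zero_of_mul hLZ.ne', (zero_lt_one.trans hD1).ne', hDH.ne']
  calc _ ≤ ∑ j ∈ Finset.Icc 1 M, ‖gdIter f' ρ j z₀ - gdIter f' η j z₀‖ :=
        abs_sum_norm_sub_sum_norm_le _ _ _
    _ ≤ C := by
      refine le_of_mul_le_mul_right (hsum.trans (le_trans ?_ hgap'))
        (mul_pos hβ0 (sub_pos.mpr hD1))
      have := sub_nonneg.mpr hρη
      gcongr

/-- Error estimation of the new cost function for gradient descent (Theorem 4):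
if `η - ρ ≤ (β/(LZ)) · ((D(ρ)-1)/(D(ρ)^H-1)) · D(ρ)⁻¹ · C` (real power `D(ρ)^H`),
then the new costs (truncated sums of the distances to the optimum) differ by at
most `C`. -/
theorem gd_new_cost_error_estimation
    {E : Type*} [NormedAddCommGroup E] [InnerProductSpace ℝ E] [CompleteSpace E]
    (f : E → ℝ) (f' : E → E) (L : ℝ) (hL : 0 < L)
    (hconv : ConvexOn ℝ Set.univ f)
    (hdiff : ∀ x : E, HasGradientAt f (f' x) x)
    (hlip : ∀ z₁ z₂ : E, ‖f' z₁ - f' z₂‖ ≤ L * ‖z₁ - z₂‖)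
    (ρl ρu : ℝ) (hρl : 0 < ρl) (hρlu : ρl ≤ ρu)
    (β : ℝ) (hβ : β ∈ Set.Ioo (0 : ℝ) 1)
    (hcontract : ∀ z : E, ∀ ρ' ∈ Set.Icc ρl ρu, ‖z - ρ' • f' z‖ ≤ (1 - β) * ‖z‖)
    (hgrad0 : f' 0 = 0)
    (ν Z : ℝ) (hν : 0 < ν) (hνLZ : ν < L * Z)
    (z₀ : E) (hz₀ν : ν < ‖z₀‖) (hz₀Z : ‖z₀‖ ≤ Z)
    (H : ℝ) (hH : H = Real.log (ν / (L * Z)) / Real.log (1 - β))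
    (C : ℝ) (hC : 0 < C)
    (ρ η : ℝ) (hρ : ρ ∈ Set.Icc ρl ρu) (hη : η ∈ Set.Icc ρl ρu) (hρη : ρ ≤ η)
    (hD : 1 < max 1 (L * ρ - 1))
    (hgap : η - ρ ≤ β / (L * Z) *
      ((max 1 (L * ρ - 1) - 1) / ((max 1 (L * ρ - 1)) ^ H - 1)) *
      (max 1 (L * ρ - 1))⁻¹ * C) :
    ∀ M : ℕ, (M : ℝ) ≤ H →
      |(∑ j ∈ Finset.Icc 1 M, ‖gdIter f' ρ j z₀‖) -
        ∑ j ∈ Finset.Icc 1 M, ‖gdIter f' η j z₀‖| ≤ C :=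
  gd_new_cost_error_estimation_general f f' L hL hconv hdiff hlip ρl ρu β hβ hcontract hgrad0 ν Z hν
    hνLZ z₀ hz₀Z H hH C ρ η hη hρη hD hgap
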